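/- Let R be a commutative ring, V a finite set, and W(V) the quotient of the polynomial ring over R in variables (x_v)_{v∈V} by the ideal generated by all x_v². Let A and B be disjoint subsets of V. Then, in W(V), the ideal generated by the products {x_a·x_b : a ∈ A, b ∈ B} equals the intersection of the ideal generated by {x_a : a ∈ A} with the ideal generated by {x_b : b ∈ B}. -/

import Mathlib

/-!
Adding the squares `x_v²` to an ideal generated by monomials gives again a monomial ideal of
`R[(x_v)_{v ∈ V}]`, so everything can be computed upstairs on exponent vectors: membership is
decided monomial by monomial, and the intersection of two monomial ideals is generated by the
joins (lcms) of their generators. For `a ∈ A`, `b ∈ B` the join of `x_a` and `x_b` is `x_a x_b`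
because `a ≠ b`, while every join involving a square is divisible by that square.
-/

open MvPolynomial

/-- The ideal of `R[(x_v)_{v ∈ V}]` generated by all the squares `x_v²`: the quotient by it
is the Weil algebra `W(V)`, the function algebra of the infinitesimal object `D^V`. -/
noncomputable def sqIdeal (R : Type*) [CommRing R] (V : Type*) : Ideal (MvPolynomial V R) :=
  Ideal.span (Set.range fun v : V => X v ^ 2)

theorem Finsupp.single_add_single_eq_sup {ι : Type*} {a b : ι} (h : a ≠ b) (m n : ℕ) :
    single a m + single b n = single a m ⊔ single b n := by
  classical
  ext v
  simp only [coe_add, Pi.add_apply, sup_apply, single_apply]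
  split_ifs <;> simp_all

theorem Ideal.map_mk_eq_inf_of_sup_eq {R : Type*} [CommRing R] {K I J L : Ideal R}
    (h : L ⊔ K = (I ⊔ K) ⊓ (J ⊔ K)) :
    L.map (Quotient.mk K) = I.map (Quotient.mk K) ⊓ J.map (Quotient.mk K) := by
  apply comap_injective_of_surjective _ Quotient.mk_surjective
  simp only [comap_inf, comap_map_of_surjective' _ Quotient.mk_surjective, mk_ker, h]

namespace MvPolynomial

variable {σ : Type*} (R : Type*) [CommSemiring R]

noncomputable def monomialIdeal (S : Set (σ →₀ ℕ)) : Ideal (MvPolynomial σ R) :=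
  Ideal.span ((fun s => monomial s 1) '' S)

variable {R}

theorem mem_monomialIdeal {S : Set (σ →₀ ℕ)} {f : MvPolynomial σ R} :
    f ∈ monomialIdeal R S ↔ ∀ d ∈ f.support, ∃ s ∈ S, s ≤ d :=
  mem_ideal_span_monomial_image

theorem monomialIdeal_union (S T : Set (σ →₀ ℕ)) :
    monomialIdeal R (S ∪ T) = monomialIdeal R S ⊔ monomialIdeal R T := by
  rw [monomialIdeal, Set.image_union, Ideal.span_union]; rfl

theorem monomialIdeal_le_monomialIdeal {S T : Set (σ →₀ ℕ)} (h : ∀ s ∈ S, ∃ t ∈ T, t ≤ s) :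
    monomialIdeal R S ≤ monomialIdeal R T := fun _ hf =>
  mem_monomialIdeal.2 fun d hd =>
    let ⟨s, hs, hsd⟩ := mem_monomialIdeal.1 hf d hd
    let ⟨t, ht, hts⟩ := h s hs
    ⟨t, ht, hts.trans hsd⟩

theorem monomialIdeal_inf (S T : Set (σ →₀ ℕ)) :
    monomialIdeal R S ⊓ monomialIdeal R T = monomialIdeal R (Set.image2 (· ⊔ ·) S T) := by
  ext f
  simp only [Submodule.mem_inf, mem_monomialIdeal, Set.exists_mem_image2, sup_le_iff,
    ← forall₂_and]
  exact forall₂_congr fun _ _ => by grind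

theorem span_X_image_eq_monomialIdeal (A : Set σ) :
    Ideal.span (X '' A) = monomialIdeal R ((Finsupp.single · 1) '' A) := by
  rw [monomialIdeal, Set.image_image]; rfl

theorem span_X_mul_X_image_eq_monomialIdeal (A B : Set σ) :
    Ideal.span ((fun p : σ × σ => X p.1 * X p.2) '' A ×ˢ B) =
      monomialIdeal R
        ((fun p : σ × σ => Finsupp.single p.1 1 + Finsupp.single p.2 1) '' A ×ˢ B) := by
  rw [monomialIdeal, Set.image_image]
  simp only [X, monomial_mul, one_mul]

end MvPolynomial

section SquareZero

variable {R : Type*} [CommRing R] {V : Type*}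

theorem sqIdeal_eq_monomialIdeal :
    sqIdeal R V = monomialIdeal R (Set.range fun v : V => Finsupp.single v 2) := by
  rw [sqIdeal, monomialIdeal, ← Set.range_comp]
  simp only [Function.comp_def, X_pow_eq_monomial]

theorem span_X_mul_X_sup_sqIdeal {A B : Set V} (hAB : Disjoint A B) :
    Ideal.span ((fun p : V × V => X p.1 * X p.2) '' A ×ˢ B) ⊔ sqIdeal R V =
      (Ideal.span (X '' A) ⊔ sqIdeal R V) ⊓ (Ideal.span (X '' B) ⊔ sqIdeal R V) := by
  rw [span_X_mul_X_image_eq_monomialIdeal, span_X_image_eq_monomialIdeal,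
    span_X_image_eq_monomialIdeal, sqIdeal_eq_monomialIdeal, ← monomialIdeal_union,
    ← monomialIdeal_union, ← monomialIdeal_union, monomialIdeal_inf]
  apply le_antisymm <;> apply monomialIdeal_le_monomialIdeal
  · rintro _ (⟨⟨a, b⟩, ⟨ha, hb⟩, rfl⟩ | hsq)
    · exact ⟨_, Set.mem_image2_of_mem (.inl ⟨a, ha, rfl⟩) (.inl ⟨b, hb, rfl⟩),
        sup_le le_self_add le_add_self⟩
    · exact ⟨_, Set.mem_image2_of_mem (.inr hsq) (.inr hsq), (sup_idem _).le⟩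
  · rintro _ ⟨s, ⟨a, ha, rfl⟩ | hs, t, ⟨b, hb, rfl⟩ | ht, rfl⟩
    · exact ⟨_, .inl ⟨(a, b), ⟨ha, hb⟩, rfl⟩,
        (Finsupp.single_add_single_eq_sup (hAB.ne_of_mem ha hb) 1 1).le⟩
    · exact ⟨t, .inr ht, le_sup_right⟩
    all_goals exact ⟨s, .inr hs, le_sup_left⟩

end SquareZero

theorem span_products_eq_inf_general {R : Type*} [CommRing R] {V : Type*}
    (A B : Set V) (hAB : Disjoint A B) :
    (Ideal.span ((fun p : V × V => Ideal.Quotient.mk (sqIdeal R V) (X p.1 * X p.2)) ''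
        (A ×ˢ B)) : Ideal (MvPolynomial V R ⧸ sqIdeal R V)) =
      Ideal.span ((fun v : V => Ideal.Quotient.mk (sqIdeal R V) (X v)) '' A) ⊓
        Ideal.span ((fun v : V => Ideal.Quotient.mk (sqIdeal R V) (X v)) '' B) := by
  have key := Ideal.map_mk_eq_inf_of_sup_eq (span_X_mul_X_sup_sqIdeal (R := R) hAB)
  simpa only [Ideal.map_span, Set.image_image] using key

/-- In `W(V) = R[(x_v)_{v ∈ V}]/(x_v²)`, for disjoint subsets `A, B ⊆ V`, the ideal
generated by the products `x_a·x_b` (`a ∈ A`, `b ∈ B`) equals the intersection of the ideal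
generated by `{x_a : a ∈ A}` with the ideal generated by `{x_b : b ∈ B}`. -/
theorem span_products_eq_inf {R : Type*} [CommRing R] {V : Type*} [Fintype V]
    (A B : Set V) (hAB : Disjoint A B) :
    (Ideal.span ((fun p : V × V => Ideal.Quotient.mk (sqIdeal R V) (X p.1 * X p.2)) ''
        (A ×ˢ B)) : Ideal (MvPolynomial V R ⧸ sqIdeal R V)) =
      Ideal.span ((fun v : V => Ideal.Quotient.mk (sqIdeal R V) (X v)) '' A) ⊓
        Ideal.span ((fun v : V => Ideal.Quotient.mk (sqIdeal R V) (X v)) '' B) :=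
  span_products_eq_inf_general A B hAB
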